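/- arXiv:1811.04759 — 5 statements merged into one kernel-verified Lean document; each statement's English description precedes it below -/
import Mathlib

section
/- For f : 𝒳 → ℝ and A, B ⊆ [n] with fixed base point x^0, the second-order difference Δ_A Δ_B f is identically zero if and only if there exist functions h depending only on coordinates outside A and g depending only on coordinates outside B such that f(x) = h(x_{−A}) + g(x_{−B}) for all x ∈ 𝒳. -/
/-- The point agreeing with `x0` on coordinates in `A` and with `x` elsewhere. -/
def patch {n : ℕ} {X : Fin n → Type*} (A : Finset (Fin n)) (x0 x : ∀ i, X i) :
    ∀ i, X i := fun i => if i ∈ A then x0 i else x i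

/-- First-order `A`-difference of `f` centered at `x0`. -/
def Δ {n : ℕ} {X : Fin n → Type*} (A : Finset (Fin n)) (x0 : ∀ i, X i)
    (f : (∀ i, X i) → ℝ) : (∀ i, X i) → ℝ :=
  fun x => f x - f (patch A x0 x)

private lemma patch_comm {n : ℕ} {X : Fin n → Type*} (A B : Finset (Fin n))
    (x0 x : ∀ i, X i) : patch B x0 (patch A x0 x) = patch A x0 (patch B x0 x) := by
  funext i
  unfold patch
  by_cases hA : i ∈ A <;> by_cases hB : i ∈ B <;> simp [hA, hB]

theorem stmt8 {n : ℕ} {X : Fin n → Type*} [∀ i, Fintype (X i)] [∀ i, Nonempty (X i)]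
    (f : (∀ i, X i) → ℝ) (A B : Finset (Fin n)) (x0 : ∀ i, X i) :
    (∀ x, Δ A x0 (Δ B x0 f) x = 0) ↔
      ∃ h g : (∀ i, X i) → ℝ,
        (∀ x x' : ∀ i, X i, (∀ i, i ∉ A → x i = x' i) → h x = h x') ∧
        (∀ x x' : ∀ i, X i, (∀ i, i ∉ B → x i = x' i) → g x = g x') ∧
        (∀ x, f x = h x + g x) := by
  constructor
  · intro hΔ
    refine ⟨fun x => f (patch A x0 x),
            fun x => f (patch B x0 x) - f (patch A x0 (patch B x0 x)), ?_, ?_, ?_⟩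
    · intro x x' hxx'
      have : patch A x0 x = patch A x0 x' := by
        funext i; unfold patch
        by_cases hi : i ∈ A
        · simp [hi]
        · simp [hi, hxx' i hi]
      dsimp only; rw [this]
    · intro x x' hxx'
      have : patch B x0 x = patch B x0 x' := by
        funext i; unfold patch
        by_cases hi : i ∈ B
        · simp [hi]
        · simp [hi, hxx' i hi]
      dsimp only; rw [this]
    · intro x
      have h1 := hΔ x
      simp only [Δ] at h1
      rw [patch_comm] at h1
      dsimp only
      linarith
  · rintro ⟨h, g, hh, hg, hf⟩ x
    simp only [Δ, hf]
    have e1 : g (patch B x0 x) = g x :=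
      hg _ _ (fun i hi => by simp [patch, hi])
    have e2 : g (patch B x0 (patch A x0 x)) = g (patch A x0 x) :=
      hg _ _ (fun i hi => by simp [patch, hi])
    have e3 : h (patch A x0 x) = h x :=
      hh _ _ (fun i hi => by simp [patch, hi])
    have e4 : h (patch B x0 (patch A x0 x)) = h (patch B x0 x) :=
      hh _ _ (fun i hi => by simp [patch, hi])
    linarith
end

section
/- Let A, B, D partition [n] and f : 𝒳 → ℝ. The following are equivalent: (i) there exists a strictly positive joint probability P on 𝒳 × {−1,+1} satisfying the conditional independence X_A ⊥ X_B | (X_D, C) (i.e., the toric equations p(x_A,x_B,x_D,c)p(x_A',x_B',x_D,c) = p(x_A,x_B',x_D,c)p(x_A',x_B,x_D,c) for all arguments) and whose induced discrimination function ln(p(x,+1)/p(x,−1)) equals f; (ii) Δ_A Δ_B f ≡ 0. -/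
section Toric

variable {n : ℕ} {X : Fin n → Type*}

section Patch

variable (x0 x' x : ∀ i, X i)

lemma patch_patch_self (A B : Finset (Fin n)) :
    patch B x0 (patch A x0 x) = patch (A ∪ B) x0 x := by
  funext i
  by_cases hA : i ∈ A <;> by_cases hB : i ∈ B <;> simp [patch, hA, hB]

lemma patch_patch_of_subset {A B : Finset (Fin n)} (hBA : B ⊆ A) :
    patch A x0 (patch B x' x) = patch A x0 x := by
  funext i
  by_cases hA : i ∈ A
  · simp [patch, hA]
  · simp [patch, hA, mt (@hBA i) hA]

lemma patch_patch_union_left (A C : Finset (Fin n)) :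
    patch A x0 (patch (A ∪ C) x' x) = patch A x0 (patch C x' x) := by
  funext i
  by_cases hA : i ∈ A <;> simp [patch, hA]

lemma patch_patch_union_right (A C : Finset (Fin n)) :
    patch C x0 (patch (A ∪ C) x' x) = patch C x0 (patch A x' x) := by
  rw [Finset.union_comm, patch_patch_union_left]

end Patch

/-- With `x = (a, b, d)` and `x' = (a', b', d')` split along `A`, `B` and the rest, this is
`g(a,b,d) g(a',b',d) = g(a,b',d) g(a',b,d)`: the toric equations of `X_A ⊥ X_B | X_rest`. -/
def IsToric (A B : Finset (Fin n)) (g : (∀ i, X i) → ℝ) : Prop :=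
  ∀ x x', g x * g (patch (A ∪ B) x' x) = g (patch B x' x) * g (patch A x' x)

def IsAddToric (A B : Finset (Fin n)) (f : (∀ i, X i) → ℝ) : Prop :=
  ∀ x x', f x + f (patch (A ∪ B) x' x) = f (patch B x' x) + f (patch A x' x)

variable {A B : Finset (Fin n)} {f g : (∀ i, X i) → ℝ}

lemma IsToric.div_const (hg : IsToric A B g) (a : ℝ) : IsToric A B (fun x => g x / a) := by
  intro x x'
  simp only [div_mul_div_comm, hg x x']

lemma IsToric.log (hpos : ∀ x, 0 < g x) (hg : IsToric A B g) :
    IsAddToric A B (fun x => Real.log (g x)) := by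
  intro x x'
  rw [← Real.log_mul (hpos _).ne' (hpos _).ne', ← Real.log_mul (hpos _).ne' (hpos _).ne', hg]

lemma IsAddToric.exp (hf : IsAddToric A B f) : IsToric A B (fun x => Real.exp (f x)) := by
  intro x x'
  simp only [← Real.exp_add, hf x x']

lemma IsAddToric.sub (hf : IsAddToric A B f) (hg : IsAddToric A B g) :
    IsAddToric A B (fun x => f x - g x) := by
  intro x x'
  linarith [hf x x', hg x x']

lemma Δ_Δ_apply (A B : Finset (Fin n)) (x0 x : ∀ i, X i) :
    Δ A x0 (Δ B x0 f) x =
      f x + f (patch (A ∪ B) x0 x) - (f (patch B x0 x) + f (patch A x0 x)) := by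
  simp only [Δ, patch_patch_self]
  ring

lemma isAddToric_iff_Δ_Δ_eq_zero (x0 : ∀ i, X i) :
    IsAddToric A B f ↔ ∀ x, Δ A x0 (Δ B x0 f) x = 0 := by
  simp only [Δ_Δ_apply, sub_eq_zero]
  refine ⟨fun hf x => hf x x0, fun h x x' => ?_⟩
  -- Apply the equation at `x0` to the four corners `x`, `x'_A x`, `x'_B x`, `x'_{A∪B} x`.
  have hA := h (patch A x' x)
  have hB := h (patch B x' x)
  have hAB := h (patch (A ∪ B) x' x)
  rw [patch_patch_of_subset _ _ _ Finset.subset_union_left,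
    patch_patch_of_subset _ _ _ subset_rfl] at hA
  rw [patch_patch_of_subset _ _ _ Finset.subset_union_right,
    patch_patch_of_subset _ _ _ subset_rfl] at hB
  rw [patch_patch_of_subset _ _ _ subset_rfl, patch_patch_union_left,
    patch_patch_union_right] at hAB
  linarith [h x]

lemma exists_density_of_isAddToric [∀ i, Fintype (X i)] [∀ i, Nonempty (X i)]
    (hf : IsAddToric A B f) :
    ∃ p : (∀ i, X i) → Bool → ℝ,
      (∀ x c, 0 < p x c) ∧
      (∑ x : ∀ i, X i, (p x true + p x false)) = 1 ∧
      (∀ c, IsToric A B (p · c)) ∧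
      (∀ x, Real.log (p x true / p x false) = f x) := by
  set S := ∑ x : ∀ i, X i, (Real.exp (f x) + 1)
  have hS : 0 < S := Finset.sum_pos (fun x _ => by positivity) Finset.univ_nonempty
  refine ⟨fun x c => (if c then Real.exp (f x) else 1) / S, ?_, ?_, ?_, ?_⟩
  · rintro x (_ | _) <;> simp only [Bool.false_eq_true, if_true, if_false] <;> positivity
  · simp only [if_true, Bool.false_eq_true, if_false, ← add_div, ← Finset.sum_div]
    exact div_self hS.ne'
  · rintro (_ | _)
    · exact fun _ _ => rfl
    · exact hf.exp.div_const S
  · intro x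
    simp only [if_true, Bool.false_eq_true, if_false, div_div_div_cancel_right₀ hS.ne', div_one,
      Real.log_exp]

end Toric

theorem stmt11_general {n : ℕ} {X : Fin n → Type*} [∀ i, Fintype (X i)] [∀ i, Nonempty (X i)]
    (A B : Finset (Fin n))
    (f : (∀ i, X i) → ℝ) (x0 : ∀ i, X i) :
    (∃ p : (∀ i, X i) → Bool → ℝ,
        (∀ x c, 0 < p x c) ∧
        (∑ x : ∀ i, X i, (p x true + p x false)) = 1 ∧
        (∀ (c : Bool) (x x' : ∀ i, X i),
          p x c * p (patch (A ∪ B) x' x) c = p (patch B x' x) c * p (patch A x' x) c) ∧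
        (∀ x, Real.log (p x true / p x false) = f x)) ↔
    (∀ x, Δ A x0 (Δ B x0 f) x = 0) := by
  rw [← isAddToric_iff_Δ_Δ_eq_zero]
  constructor
  · rintro ⟨p, hpos, -, htoric, hlog⟩
    have hf : f = fun x => Real.log (p x true) - Real.log (p x false) := by
      funext x
      rw [← hlog, Real.log_div (hpos x true).ne' (hpos x false).ne']
    subst hf
    exact (IsToric.log (hpos · true) (htoric true)).sub (IsToric.log (hpos · false) (htoric false))
  · exact exists_density_of_isAddToric

/-- For a partition `A, B, D` of the predictor indices and `f : 𝒳 → ℝ`, the following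
are equivalent: (i) there exists a strictly positive joint density `p` on `𝒳 × {−1,+1}`
(class encoded by `Bool`, `true ↦ +1`) summing to one, satisfying the conditional
independence `X_A ⊥ X_B | (X_D, C)` (toric equations), whose induced discrimination
function `ln (p(x,+1)/p(x,−1))` equals `f`; (ii) `Δ_A Δ_B f ≡ 0`. -/
theorem stmt11 {n : ℕ} {X : Fin n → Type*} [∀ i, Fintype (X i)] [∀ i, Nonempty (X i)]
    [∀ i, DecidableEq (X i)]
    (A B D : Finset (Fin n))
    (hAB : Disjoint A B) (hAD : Disjoint A D) (hBD : Disjoint B D)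
    (hcover : A ∪ B ∪ D = Finset.univ)
    (f : (∀ i, X i) → ℝ) (x0 : ∀ i, X i) :
    (∃ p : (∀ i, X i) → Bool → ℝ,
        (∀ x c, 0 < p x c) ∧
        (∑ x : ∀ i, X i, (p x true + p x false)) = 1 ∧
        (∀ (c : Bool) (x x' : ∀ i, X i),
          p x c * p (patch (A ∪ B) x' x) c = p (patch B x' x) c * p (patch A x' x) c) ∧
        (∀ x, Real.log (p x true / p x false) = f x)) ↔
    (∀ x, Δ A x0 (Δ B x0 f) x = 0) :=
  stmt11_general A B f x0
end

section
/- Let G be an undirected graph on vertex set [n] and f : 𝒳 → ℝ with fixed base point x^0. If for every pair of non-adjacent vertices a, b the second-order difference Δ_{{a}} Δ_{{b}} f is identically zero, then f(x) = ∑_{A ⊆ [n]} g_A(x_A) where each g_A depends only on coordinates in A, and g_A ≡ 0 whenever the induced subgraph G_A is not complete. -/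
open Finset

lemma mobius {α : Type*} [DecidableEq α] (s : Finset α) (h : Finset α → ℝ) :
    ∑ A ∈ s.powerset, ∑ B ∈ A.powerset, (-1:ℝ)^(A.card + B.card) * h B = h s := by
  induction s using Finset.induction generalizing h with
  | empty => simp
  | @insert a s ha ih =>
    rw [Finset.sum_powerset_insert ha]
    have key : ∀ A ∈ s.powerset,
        ∑ B ∈ (insert a A).powerset, (-1:ℝ)^((insert a A).card + B.card) * h B
        = -(∑ B ∈ A.powerset, (-1:ℝ)^(A.card + B.card) * h B)
          + ∑ B ∈ A.powerset, (-1:ℝ)^(A.card + B.card) * h (insert a B) := by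
      intro A hA
      have haA : a ∉ A := fun hx => ha (mem_powerset.mp hA hx)
      rw [Finset.sum_powerset_insert haA, card_insert_of_notMem haA,
        ← Finset.sum_neg_distrib, ← Finset.sum_add_distrib, ← Finset.sum_add_distrib]
      apply Finset.sum_congr rfl
      intro B hB
      have haB : a ∉ B := fun hx => haA (mem_powerset.mp hB hx)
      rw [card_insert_of_notMem haB]
      ring
    rw [Finset.sum_congr rfl key, Finset.sum_add_distrib, Finset.sum_neg_distrib,
      add_neg_cancel_left]
    exact ih _

lemma patch_single {n : ℕ} {X : Fin n → Type*} (j : Fin n) (C : Finset (Fin n))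
    (x0 x : ∀ i, X i) :
    patch {j} x0 (patch Cᶜ x0 x) = patch (C.erase j)ᶜ x0 x := by
  funext i
  unfold patch
  by_cases hij : i = j
  · subst hij; simp
  · simp [hij, mem_erase]

/-- If for every pair of non-adjacent vertices `a, b` of `G` the second-order
difference `Δ_a Δ_b f` vanishes identically, then `f` decomposes as a sum of
functions `g_A` depending only on coordinates in `A`, with `g_A ≡ 0` whenever the
induced subgraph `G_A` is not complete. -/
theorem stmt14 {n : ℕ} {X : Fin n → Type*} [∀ i, Fintype (X i)] [∀ i, Nonempty (X i)]
    (G : SimpleGraph (Fin n)) (f : (∀ i, X i) → ℝ) (x0 : ∀ i, X i)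
    (h : ∀ a b : Fin n, a ≠ b → ¬ G.Adj a b →
        ∀ x, Δ {a} x0 (Δ {b} x0 f) x = 0) :
    ∃ g : Finset (Fin n) → (∀ i, X i) → ℝ,
      (∀ (A : Finset (Fin n)) (x x' : ∀ i, X i),
          (∀ i ∈ A, x i = x' i) → g A x = g A x') ∧
      (∀ A : Finset (Fin n),
          ¬ (∀ a ∈ A, ∀ b ∈ A, a ≠ b → G.Adj a b) → ∀ x, g A x = 0) ∧
      (∀ x, f x = ∑ A : Finset (Fin n), g A x) := by
  refine ⟨fun A x => ∑ B ∈ A.powerset, (-1:ℝ)^(A.card + B.card) * f (patch Bᶜ x0 x),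
    ?_, ?_, ?_⟩
  · -- dependence only on coordinates in A
    intro A x x' hxx'
    apply Finset.sum_congr rfl
    intro B hB
    have hBA : B ⊆ A := mem_powerset.mp hB
    congr 1
    congr 1
    funext i
    unfold patch
    by_cases hi : i ∈ Bᶜ
    · simp [hi]
    · simp only [hi, if_false]
      exact hxx' i (hBA (by simpa using hi))
  · -- vanishing on non-complete A
    intro A hA x
    push_neg at hA
    obtain ⟨a, haA, b, hbA, hab, hadj⟩ := hA
    set S : Finset (Fin n) := (A.erase a).erase b with hS
    have hbS : b ∉ S := notMem_erase _ _
    have haS : a ∉ insert b S := by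
      simp only [mem_insert, hS]
      rintro (rfl | hx)
      · exact hab rfl
      · exact notMem_erase a A (mem_of_mem_erase hx)
    have hAeq : A = insert a (insert b S) := by
      rw [hS, insert_erase (mem_erase.mpr ⟨Ne.symm hab, hbA⟩), insert_erase haA]
    calc ∑ B ∈ A.powerset, (-1:ℝ)^(A.card + B.card) * f (patch Bᶜ x0 x)
        = ∑ B ∈ S.powerset,
            ((-1:ℝ)^(A.card + B.card) * f (patch Bᶜ x0 x)
            + (-1:ℝ)^(A.card + (insert b B).card) * f (patch (insert b B)ᶜ x0 x)
            + ((-1:ℝ)^(A.card + (insert a B).card) * f (patch (insert a B)ᶜ x0 x)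
            + (-1:ℝ)^(A.card + (insert a (insert b B)).card)
                * f (patch (insert a (insert b B))ᶜ x0 x))) := by
          conv_lhs => rw [hAeq]
          rw [Finset.sum_powerset_insert haS, Finset.sum_powerset_insert hbS,
            Finset.sum_powerset_insert hbS, ← Finset.sum_add_distrib,
            ← Finset.sum_add_distrib, ← Finset.sum_add_distrib]
          apply Finset.sum_congr rfl
          intro B hB
          rw [← hAeq]
      _ = 0 := by
          apply Finset.sum_eq_zero
          intro B hB
          have hbB : b ∉ B := fun hx => hbS (mem_powerset.mp hB hx)
          have haB : a ∉ insert b B := fun hx => by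
            rcases mem_insert.mp hx with rfl | hx
            · exact hab rfl
            · exact haS (mem_insert_of_mem (mem_powerset.mp hB hx))
          have haB' : a ∉ B := fun hx => haB (mem_insert_of_mem hx)
          have hz := h a b hab hadj (patch (insert a (insert b B))ᶜ x0 x)
          simp only [Δ] at hz
          rw [patch_single, patch_single, patch_single] at hz
          rw [Finset.erase_insert_of_ne hab, erase_insert hbB, erase_insert haB,
            erase_insert hbB] at hz
          rw [card_insert_of_notMem hbB, card_insert_of_notMem haB',
            card_insert_of_notMem haB, card_insert_of_notMem hbB]
          linear_combination ((-1:ℝ)^(A.card + B.card)) * hz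
  · -- decomposition
    intro x
    have := mobius (univ : Finset (Fin n)) (fun B => f (patch Bᶜ x0 x))
    rw [← Finset.powerset_univ]
    rw [this]
    congr 1
    funext i
    simp [patch]
end

section
/- Let G be an undirected graph on [n] and f : 𝒳 → ℝ. If f admits a decomposition f(x) = ∑_{A ⊆ [n]} g_A(x_A) where each g_A depends only on coordinates in A and g_A ≡ 0 whenever G_A is not complete, then for every pair of disjoint sets A, B ⊆ [n] that are separated by [n]∖(A∪B) in G (equivalently, no vertex of A is adjacent to a vertex of B), the second-order difference Δ_A Δ_B f is identically zero. -/
/-- If `f` decomposes over the complete subgraphs of `G`, then for every pair of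
disjoint sets `A, B` separated by their complement in `G` (i.e. no vertex of `A` is
adjacent to a vertex of `B`), the second-order difference `Δ_A Δ_B f` vanishes. -/
theorem stmt15 {n : ℕ} {X : Fin n → Type*} [∀ i, Fintype (X i)] [∀ i, Nonempty (X i)]
    (G : SimpleGraph (Fin n)) (f : (∀ i, X i) → ℝ) (x0 : ∀ i, X i)
    (g : Finset (Fin n) → (∀ i, X i) → ℝ)
    (hdep : ∀ (A : Finset (Fin n)) (x x' : ∀ i, X i),
        (∀ i ∈ A, x i = x' i) → g A x = g A x')
    (hcomp : ∀ A : Finset (Fin n),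
        ¬ (∀ a ∈ A, ∀ b ∈ A, a ≠ b → G.Adj a b) → ∀ x, g A x = 0)
    (hf : ∀ x, f x = ∑ A : Finset (Fin n), g A x) :
    ∀ A B : Finset (Fin n), Disjoint A B →
      (∀ a ∈ A, ∀ b ∈ B, ¬ G.Adj a b) →
      ∀ x, Δ A x0 (Δ B x0 f) x = 0 := by
  intro A B hdisj hsep x
  simp only [Δ, hf]
  rw [← Finset.sum_sub_distrib, ← Finset.sum_sub_distrib, ← Finset.sum_sub_distrib]
  apply Finset.sum_eq_zero
  intro C _
  by_cases hc : ∀ a ∈ C, ∀ b ∈ C, a ≠ b → G.Adj a b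
  · -- C clique: C∩A = ∅ or C∩B = ∅
    by_cases hCB : ∀ i ∈ C, i ∉ B
    · -- patching B does nothing on C
      have h1 : g C x = g C (patch B x0 x) := by
        apply hdep; intro i hi; simp [patch, hCB i hi]
      have h2 : g C (patch A x0 x) = g C (patch B x0 (patch A x0 x)) := by
        apply hdep; intro i hi; simp [patch, hCB i hi]
      rw [← h1, ← h2]; ring
    · push_neg at hCB
      obtain ⟨b, hbC, hbB⟩ := hCB
      have hCA : ∀ i ∈ C, i ∉ A := by
        intro a haC haA
        have hab : a ≠ b := fun h => (Finset.disjoint_left.mp hdisj haA) (h ▸ hbB)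
        exact hsep a haA b hbB (hc a haC b hbC hab)
      have h1 : g C x = g C (patch A x0 x) := by
        apply hdep; intro i hi; simp [patch, hCA i hi]
      have h2 : g C (patch B x0 x) = g C (patch B x0 (patch A x0 x)) := by
        apply hdep; intro i hi; simp [patch, hCA i hi]
      rw [← h1, ← h2]; ring
  · simp [hcomp C hc]
end

section
/- Suppose f : 𝒳 → ℝ decomposes as f(x) = h(x_{−A}) + g(x_{−B}) with h depending only on coordinates outside A and g only on coordinates outside B, where A and B are disjoint. Then for any C ⊆ A∪B intersecting both A and B nontrivially, sign(f) contains no C-XOR; in particular it contains no {a,b}-XOR for a ∈ A, b ∈ B. -/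
/-- `φ` contains a `C`-XOR: there are a background point `x0` and, for each `i ∈ C`,
two distinct values `xd i ≠ xdd i`, such that on the induced hypercube
(parametrized by `s : Fin n → Bool`, `s i = false ↦ xd i`) `φ` equals the parity
function `∏_{i ∈ C} (−1)^{[x_i = ẋ_i]}`. -/
def containsXOR {n : ℕ} {X : Fin n → Type*} (C : Finset (Fin n))
    (φ : (∀ i, X i) → ℤ) : Prop :=
  ∃ x0 xd xdd : ∀ i, X i,
    (∀ i ∈ C, xd i ≠ xdd i) ∧
    ∀ s : Fin n → Bool,
      φ (fun i => if i ∈ C then (if s i then xdd i else xd i) else x0 i)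
        = ∏ i ∈ C, (if s i then (1 : ℤ) else -1)

/-- If `f = h + g` with `h` not depending on coordinates in `A` and `g` not depending
on coordinates in `B`, with `A, B` disjoint, then `sign f` contains no `C`-XOR for any
`C ⊆ A ∪ B` intersecting both `A` and `B`; in particular no `{a,b}`-XOR with
`a ∈ A`, `b ∈ B`. -/
theorem stmt17 {n : ℕ} {X : Fin n → Type*} [∀ i, Fintype (X i)] [∀ i, Nonempty (X i)]
    (f h g : (∀ i, X i) → ℝ) (A B : Finset (Fin n)) (hAB : Disjoint A B)
    (hh : ∀ x x' : ∀ i, X i, (∀ i, i ∉ A → x i = x' i) → h x = h x')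
    (hg : ∀ x x' : ∀ i, X i, (∀ i, i ∉ B → x i = x' i) → g x = g x')
    (hf : ∀ x, f x = h x + g x) :
    (∀ C : Finset (Fin n), C ⊆ A ∪ B → (C ∩ A).Nonempty → (C ∩ B).Nonempty →
        ¬ containsXOR C (fun x => if 0 < f x then (1 : ℤ) else -1)) ∧
    (∀ a ∈ A, ∀ b ∈ B,
        ¬ containsXOR {a, b} (fun x => if 0 < f x then (1 : ℤ) else -1)) := by
  
  have main : ∀ C : Finset (Fin n), C ⊆ A ∪ B → (C ∩ A).Nonempty → (C ∩ B).Nonempty →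
      ¬ containsXOR C (fun x => if 0 < f x then (1 : ℤ) else -1) := by
    intro C _hCAB hA hB hcon
    obtain ⟨a, haCA⟩ := hA
    obtain ⟨b, hbCB⟩ := hB
    obtain ⟨haC, haA⟩ := Finset.mem_inter.mp haCA
    obtain ⟨hbC, hbB⟩ := Finset.mem_inter.mp hbCB
    have hab : a ≠ b := fun e => (Finset.disjoint_left.mp hAB haA) (e ▸ hbB)
    obtain ⟨x0, xd, xdd, _hd, hs⟩ := hcon
    set pt : (Fin n → Bool) → ∀ i, X i := fun s => fun i =>
      if i ∈ C then (if s i then xdd i else xd i) else x0 i with hpt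
    have hpt_eq : ∀ s t : Fin n → Bool, ∀ i, s i = t i → pt s i = pt t i := by
      intro s t i hst
      simp only [hpt, hst]
    set s00 : Fin n → Bool := fun _ => false with hs00
    set s10 : Fin n → Bool := fun i => decide (i = a) with hs10
    set s01 : Fin n → Bool := fun i => decide (i = b) with hs01
    set s11 : Fin n → Bool := fun i => decide (i = a ∨ i = b) with hs11
    -- sign equations
    have key : ∀ s t : Fin n → Bool,
        (∏ i ∈ C, (if s i then (1:ℤ) else -1)) * (∏ i ∈ C, (if t i then (1:ℤ) else -1))
          = ∏ i ∈ C, (if s i = t i then (1:ℤ) else -1) := by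
      intro s t
      rw [← Finset.prod_mul_distrib]
      refine Finset.prod_congr rfl fun i _ => ?_
      cases s i <;> cases t i <;> norm_num
    have prodA : (∏ i ∈ C, (if s00 i = s10 i then (1:ℤ) else -1)) = -1 := by
      have : (∏ i ∈ C, (if s00 i = s10 i then (1:ℤ) else -1))
          = ∏ i ∈ C, (if i = a then (-1:ℤ) else 1) := by
        refine Finset.prod_congr rfl fun i _ => ?_
        by_cases hia : i = a <;> simp [hs00, hs10, hia]
      rw [this, Finset.prod_ite_eq' C a (fun _ => (-1:ℤ)), if_pos haC]
    have prodB : (∏ i ∈ C, (if s00 i = s01 i then (1:ℤ) else -1)) = -1 := by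
      have : (∏ i ∈ C, (if s00 i = s01 i then (1:ℤ) else -1))
          = ∏ i ∈ C, (if i = b then (-1:ℤ) else 1) := by
        refine Finset.prod_congr rfl fun i _ => ?_
        by_cases hib : i = b <;> simp [hs00, hs01, hib]
      rw [this, Finset.prod_ite_eq' C b (fun _ => (-1:ℤ)), if_pos hbC]
    have prodC : (∏ i ∈ C, (if s10 i = s11 i then (1:ℤ) else -1)) = -1 := by
      have : (∏ i ∈ C, (if s10 i = s11 i then (1:ℤ) else -1))
          = ∏ i ∈ C, (if i = b then (-1:ℤ) else 1) := by
        refine Finset.prod_congr rfl fun i _ => ?_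
        by_cases hib : i = b
        · subst hib
          simp [hs10, hs11, hab, Ne.symm hab]
        · by_cases hia : i = a <;> simp [hs10, hs11, hia, hib, hab]
      rw [this, Finset.prod_ite_eq' C b (fun _ => (-1:ℤ)), if_pos hbC]
    have E00 := hs s00
    have E10 := hs s10
    have E01 := hs s01
    have E11 := hs s11
    simp only [] at E00 E10 E01 E11
    have E1 : (if 0 < f (pt s00) then (1:ℤ) else -1) * (if 0 < f (pt s10) then (1:ℤ) else -1) = -1 := by
      rw [show f (pt s00) = f (fun i => if i ∈ C then (if s00 i then xdd i else xd i) else x0 i) from rfl,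
        show f (pt s10) = f (fun i => if i ∈ C then (if s10 i then xdd i else xd i) else x0 i) from rfl]
      rw [E00, E10, key, prodA]
    have E2 : (if 0 < f (pt s00) then (1:ℤ) else -1) * (if 0 < f (pt s01) then (1:ℤ) else -1) = -1 := by
      rw [show f (pt s00) = f (fun i => if i ∈ C then (if s00 i then xdd i else xd i) else x0 i) from rfl,
        show f (pt s01) = f (fun i => if i ∈ C then (if s01 i then xdd i else xd i) else x0 i) from rfl]
      rw [E00, E01, key, prodB]
    have E3 : (if 0 < f (pt s10) then (1:ℤ) else -1) * (if 0 < f (pt s11) then (1:ℤ) else -1) = -1 := by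
      rw [show f (pt s10) = f (fun i => if i ∈ C then (if s10 i then xdd i else xd i) else x0 i) from rfl,
        show f (pt s11) = f (fun i => if i ∈ C then (if s11 i then xdd i else xd i) else x0 i) from rfl]
      rw [E10, E11, key, prodC]
    -- the additive structure
    have hh1 : h (pt s00) = h (pt s10) := by
      refine hh _ _ fun i hiA => hpt_eq _ _ i ?_
      have hia : i ≠ a := fun e => hiA (e ▸ haA)
      simp [hs00, hs10, hia]
    have hh2 : h (pt s01) = h (pt s11) := by
      refine hh _ _ fun i hiA => hpt_eq _ _ i ?_
      have hia : i ≠ a := fun e => hiA (e ▸ haA)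
      simp [hs01, hs11, hia]
    have hg1 : g (pt s00) = g (pt s01) := by
      refine hg _ _ fun i hiB => hpt_eq _ _ i ?_
      have hib : i ≠ b := fun e => hiB (e ▸ hbB)
      simp [hs00, hs01, hib]
    have hg2 : g (pt s10) = g (pt s11) := by
      refine hg _ _ fun i hiB => hpt_eq _ _ i ?_
      have hib : i ≠ b := fun e => hiB (e ▸ hbB)
      simp [hs10, hs11, hib]
    have hsum : f (pt s00) + f (pt s11) = f (pt s10) + f (pt s01) := by
      rw [hf, hf, hf, hf]
      linarith [hh1, hh2, hg1, hg2]
    split_ifs at E1 E2 E3 <;>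
      first
        | linarith
        | norm_num at E1 E2 E3
  refine ⟨main, fun a ha b hb => ?_⟩
  have hab : a ≠ b := fun e => (Finset.disjoint_left.mp hAB ha) (e ▸ hb)
  refine main {a, b} ?_ ⟨a, ?_⟩ ⟨b, ?_⟩
  · intro i hi
    rcases Finset.mem_insert.mp hi with h1 | h1
    · exact Finset.mem_union_left _ (h1 ▸ ha)
    · exact Finset.mem_union_right _ ((Finset.mem_singleton.mp h1) ▸ hb)
  · exact Finset.mem_inter.mpr ⟨Finset.mem_insert_self _ _, ha⟩
  · exact Finset.mem_inter.mpr ⟨Finset.mem_insert_of_mem (Finset.mem_singleton_self _), hb⟩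
end
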